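/- Let T be a valid cut of S that is indivisible, i.e., no S-mincut divides T (for every S-mincut A, either A ∩ T = ∅ or T ⊆ A). Let N be a tight mincut for T. Then no S-mincut divides N: for every S-mincut A, either A ∩ N = ∅ or N ⊆ A. -/
import Mathlib

open Finset

/-- Capacity of the cut defined by `A`: number of edges with one endpoint in `A`
and the other outside `A`. -/
def cap {V : Type*} [Fintype V] [DecidableEq V] (w : V → V → ℕ) (A : Finset V) : ℕ :=
  ∑ a ∈ A, ∑ b ∈ Aᶜ, w a b

/-- A cut of `V` is a subset `A` with `∅ ≠ A ≠ V`. -/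
def IsCut {V : Type*} [Fintype V] (A : Finset V) : Prop :=
  A ≠ ∅ ∧ A ≠ Finset.univ

/-- An `S`-cut is a cut that divides `S`. -/
def IsSCut {V : Type*} [Fintype V] [DecidableEq V] (S A : Finset V) : Prop :=
  IsCut A ∧ (A ∩ S).Nonempty ∧ (S \ A).Nonempty

/-- An `S`-mincut is an `S`-cut of minimum capacity among all `S`-cuts. -/
def IsSMincut {V : Type*} [Fintype V] [DecidableEq V] (w : V → V → ℕ) (S A : Finset V) : Prop :=
  IsSCut S A ∧ ∀ B : Finset V, IsSCut S B → cap w A ≤ cap w B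

/-- `T ⊆ S` is a valid cut of `S` if some `S`-mincut `A` satisfies `A ∩ S = T`. -/
def IsValidCut {V : Type*} [Fintype V] [DecidableEq V] (w : V → V → ℕ) (S T : Finset V) : Prop :=
  ∃ A : Finset V, IsSMincut w S A ∧ A ∩ S = T

/-- A tight mincut for a valid cut `T` of `S`. -/
def IsTightMincut {V : Type*} [Fintype V] [DecidableEq V] (w : V → V → ℕ)
    (S T N : Finset V) : Prop :=
  IsSMincut w S N ∧ N ∩ S = T ∧ ∀ A : Finset V, IsSMincut w S A → A ∩ S = T → N ⊆ A

/-- A loose mincut for a valid cut `T` of `S`. -/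
def IsLooseMincut {V : Type*} [Fintype V] [DecidableEq V] (w : V → V → ℕ)
    (S T F : Finset V) : Prop :=
  IsSMincut w S F ∧ F ∩ S = T ∧ ∀ A : Finset V, IsSMincut w S A → A ∩ S = T → A ⊆ F

lemma cap_eq {V : Type*} [Fintype V] [DecidableEq V] (w : V → V → ℕ) (A : Finset V) :
    cap w A = ∑ a ∈ univ, ∑ b ∈ univ, if a ∈ A ∧ b ∉ A then w a b else 0 := by
  unfold cap
  have h : ∀ a : V, (∑ b ∈ univ, if a ∈ A ∧ b ∉ A then w a b else 0)
      = if a ∈ A then ∑ b ∈ Aᶜ, w a b else 0 := by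
    intro a
    by_cases ha : a ∈ A
    · simp only [ha, true_and, if_true, ← Finset.mem_compl]
      rw [Finset.sum_ite_mem, Finset.univ_inter]
    · simp [ha]
  simp_rw [h]
  rw [Finset.sum_ite_mem, Finset.univ_inter]

lemma cap_submod {V : Type*} [Fintype V] [DecidableEq V] (w : V → V → ℕ) (A B : Finset V) :
    cap w (A ∩ B) + cap w (A ∪ B) ≤ cap w A + cap w B := by
  simp only [cap_eq]
  rw [← Finset.sum_add_distrib, ← Finset.sum_add_distrib]
  refine Finset.sum_le_sum fun a _ => ?_
  rw [← Finset.sum_add_distrib, ← Finset.sum_add_distrib]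
  refine Finset.sum_le_sum fun b _ => ?_
  by_cases h1 : a ∈ A <;> by_cases h2 : a ∈ B <;> by_cases h3 : b ∈ A <;> by_cases h4 : b ∈ B <;>
    simp [h1, h2, h3, h4, Finset.mem_inter, Finset.mem_union]

lemma cap_compl {V : Type*} [Fintype V] [DecidableEq V] (w : V → V → ℕ)
    (hsymm : ∀ u v : V, w u v = w v u) (A : Finset V) : cap w Aᶜ = cap w A := by
  unfold cap
  rw [compl_compl, Finset.sum_comm]
  exact Finset.sum_congr rfl fun a _ => Finset.sum_congr rfl fun b _ => hsymm b a

lemma cap_posimod {V : Type*} [Fintype V] [DecidableEq V] (w : V → V → ℕ)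
    (hsymm : ∀ u v : V, w u v = w v u) (A B : Finset V) :
    cap w (A \ B) + cap w (B \ A) ≤ cap w A + cap w B := by
  have h := cap_submod w A Bᶜ
  rw [cap_compl w hsymm B] at h
  have e1 : A ∩ Bᶜ = A \ B := sdiff_eq.symm
  have e2 : cap w (A ∪ Bᶜ) = cap w (B \ A) := by
    rw [← cap_compl w hsymm (A ∪ Bᶜ), Finset.compl_union, compl_compl, Finset.inter_comm]
    exact congrArg (cap w) sdiff_eq.symm
  rw [e1, e2] at h
  exact h

lemma mkSCut {V : Type*} [Fintype V] [DecidableEq V] {S A : Finset V}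
    (h1 : (A ∩ S).Nonempty) (h2 : (S \ A).Nonempty) : IsSCut S A := by
  refine ⟨⟨?_, ?_⟩, h1, h2⟩
  · obtain ⟨x, hx⟩ := h1
    exact Finset.ne_empty_of_mem (Finset.mem_of_mem_inter_left hx)
  · obtain ⟨y, hy⟩ := h2
    rw [Finset.mem_sdiff] at hy
    intro h
    exact hy.2 (h ▸ Finset.mem_univ y)

/-- If `T` is an indivisible valid cut of `S` and `N` is its tight mincut,
then no `S`-mincut divides `N`. -/
theorem no_smincut_divides_tight_of_indivisible {V : Type*} [Fintype V] [DecidableEq V]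
    (w : V → V → ℕ) (hsymm : ∀ u v : V, w u v = w v u) (hloop : ∀ v : V, w v v = 0)
    (S : Finset V) (hS : 2 ≤ S.card)
    (T : Finset V) (hT : IsValidCut w S T)
    (hind : ∀ A : Finset V, IsSMincut w S A → A ∩ T = ∅ ∨ T ⊆ A)
    (N : Finset V) (hN : IsTightMincut w S T N) :
    ∀ A : Finset V, IsSMincut w S A → A ∩ N = ∅ ∨ N ⊆ A := by
  intro A hA
  obtain ⟨⟨hNcut, hNmin⟩, hNS, hNtight⟩ := hN
  -- T = N ∩ S
  have hTsub : T ⊆ S := hNS ▸ Finset.inter_subset_right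
  have hTne : T.Nonempty := hNS ▸ hNcut.2.1
  have hcapAN : cap w A = cap w N :=
    le_antisymm (hA.2 N hNcut) (hNmin A hA.1)
  rcases hind A hA with hdis | hsub
  · -- A ∩ T = ∅ ; show A ∩ N = ∅
    left
    -- C = N \ A is an S-cut with C ∩ S = T
    have hCS : (N \ A) ∩ S = T := by
      ext x
      simp only [Finset.mem_inter, Finset.mem_sdiff]
      constructor
      · rintro ⟨⟨hxN, _⟩, hxS⟩
        rw [← hNS]; exact Finset.mem_inter.mpr ⟨hxN, hxS⟩
      · intro hxT
        have hxNS : x ∈ N ∩ S := hNS ▸ hxT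
        rw [Finset.mem_inter] at hxNS
        refine ⟨⟨hxNS.1, fun hxA => ?_⟩, hxNS.2⟩
        have : x ∈ A ∩ T := Finset.mem_inter.mpr ⟨hxA, hxT⟩
        rw [hdis] at this; exact absurd this (Finset.notMem_empty x)
    have hC : IsSCut S (N \ A) := by
      refine mkSCut (hCS ▸ hTne) ?_
      obtain ⟨y, hy⟩ := hNcut.2.2
      rw [Finset.mem_sdiff] at hy
      exact ⟨y, Finset.mem_sdiff.mpr ⟨hy.1, fun h => hy.2 (Finset.mem_sdiff.mp h).1⟩⟩
    have hD : IsSCut S (A \ N) := by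
      refine mkSCut ?_ ?_
      · obtain ⟨x, hx⟩ := hA.1.2.1
        rw [Finset.mem_inter] at hx
        refine ⟨x, Finset.mem_inter.mpr ⟨Finset.mem_sdiff.mpr ⟨hx.1, fun hxN => ?_⟩, hx.2⟩⟩
        have hxT : x ∈ T := hNS ▸ Finset.mem_inter.mpr ⟨hxN, hx.2⟩
        have : x ∈ A ∩ T := Finset.mem_inter.mpr ⟨hx.1, hxT⟩
        rw [hdis] at this; exact absurd this (Finset.notMem_empty x)
      · obtain ⟨x, hxT⟩ := hTne
        refine ⟨x, Finset.mem_sdiff.mpr ⟨hTsub hxT, fun h => ?_⟩⟩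
        have : x ∈ A ∩ T := Finset.mem_inter.mpr ⟨(Finset.mem_sdiff.mp h).1, hxT⟩
        rw [hdis] at this; exact absurd this (Finset.notMem_empty x)
    -- posimodularity forces cap (N \ A) = cap N
    have hle := cap_posimod w hsymm N A
    have h1 := hNmin _ hC
    have h2 := hNmin _ hD
    have hCeq : cap w (N \ A) = cap w N := by omega
    have hCmin : IsSMincut w S (N \ A) :=
      ⟨hC, fun B hB => hCeq ▸ hNmin B hB⟩
    have := hNtight _ hCmin hCS
    ext x
    simp only [Finset.mem_inter, Finset.notMem_empty, iff_false]
    rintro ⟨hxA, hxN⟩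
    exact (Finset.mem_sdiff.mp (this hxN)).2 hxA
  · -- T ⊆ A ; show N ⊆ A
    right
    have hCS : (N ∩ A) ∩ S = T := by
      rw [Finset.inter_right_comm, hNS]
      exact Finset.inter_eq_left.mpr (hsub.trans Finset.Subset.rfl)
    have hC : IsSCut S (N ∩ A) := by
      refine mkSCut (hCS ▸ hTne) ?_
      obtain ⟨y, hy⟩ := hA.1.2.2
      rw [Finset.mem_sdiff] at hy
      exact ⟨y, Finset.mem_sdiff.mpr ⟨hy.1, fun h => hy.2 (Finset.mem_inter.mp h).2⟩⟩
    have hD : IsSCut S (N ∪ A) := by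
      refine mkSCut ?_ ?_
      · obtain ⟨x, hxT⟩ := hTne
        have hxNS : x ∈ N ∩ S := hNS ▸ hxT
        rw [Finset.mem_inter] at hxNS
        exact ⟨x, Finset.mem_inter.mpr ⟨Finset.mem_union_left _ hxNS.1, hxNS.2⟩⟩
      · obtain ⟨y, hy⟩ := hA.1.2.2
        rw [Finset.mem_sdiff] at hy
        refine ⟨y, Finset.mem_sdiff.mpr ⟨hy.1, fun h => ?_⟩⟩
        rcases Finset.mem_union.mp h with hyN | hyA
        · exact hy.2 (hsub (hNS ▸ Finset.mem_inter.mpr ⟨hyN, hy.1⟩))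
        · exact hy.2 hyA
    have hle := cap_submod w N A
    have h1 := hNmin _ hC
    have h2 := hNmin _ hD
    have hCeq : cap w (N ∩ A) = cap w N := by omega
    have hCmin : IsSMincut w S (N ∩ A) :=
      ⟨hC, fun B hB => hCeq ▸ hNmin B hB⟩
    have := hNtight _ hCmin hCS
    exact fun x hx => (Finset.mem_inter.mp (this hx)).2
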